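/- Consider the incremental algorithm with iterates $x_{k+1} = x_{k,m}$ where $x_{k,0} = x_k$ and $x_{k,i+1} = \mathcal{P}_X(x_{k,i} - \gamma_k(g_{f_{i+1}}(x_{k,i}) + \frac{\lambda_k}{m} g_h(x_{k,i})))$. If $0 < \gamma_k \lambda_k \mu_h \leq 2m$, then $\|x_{k+1} - x_{\lambda_k}^*\|^2 \leq (1 - \frac{\gamma_k \lambda_k \mu_h}{m})\|x_k - x_{\lambda_k}^*\|^2 + 6 m^2 \gamma_k^2 (C_f^2 + \lambda_k^2 C_h^2)$, where $x_{\lambda_k}^*$ is the unique minimizer of $f + \lambda_k h$ over $X$. -/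

import Mathlib

/-!
Each inner step is a projected subgradient step for `φᵢ = fᵢ + (λ/m) h`, whose subgradients are
bounded by `C = C_f + (λ/m) C_h`. Nonexpansiveness of the projection gives the one-step inequality
`‖x_{k,i+1} - x*‖² ≤ ‖x_{k,i} - x*‖² - 2γ (φᵢ(x_{k,i}) - φᵢ(x*)) + γ²C²`. The inner iterates move
by at most `γC` per step, so the Lipschitz bound moves `φᵢ(x_{k,i})` to `φᵢ(x_k)` at the price
`C · iγC`; summing over the cycle gives
`‖x_{k+1} - x*‖² ≤ ‖x_k - x*‖² - 2γ (F(x_k) - F(x*)) + (mγC)²` with `F = f + λh`.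
Finally `F` is `λμ`-strongly convex and minimized over `X` at `x*`, so
`F(x_k) - F(x*) ≥ (λμ/2) ‖x_k - x*‖²`.
-/

open Filter Finset Real Set
open scoped RealInnerProductSpace Topology BigOperators

noncomputable section

abbrev Euc (n : ℕ) := EuclideanSpace ℝ (Fin n)

/-- `g` is a subgradient of `f` at `x`. -/
def IsSubgradAt {n : ℕ} (f : Euc n → ℝ) (x g : Euc n) : Prop :=
  ∀ y, f x + (inner ℝ g (y - x) : ℝ) ≤ f y

/-- `y` is the Euclidean projection of `p` onto `X`. -/
def IsProjOn {n : ℕ} (X : Set (Euc n)) (p y : Euc n) : Prop :=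
  y ∈ X ∧ ∀ z ∈ X, ‖p - y‖ ≤ ‖p - z‖

lemma le_of_forall_one_sub_mul_le {a b : ℝ} (h : ∀ t ∈ Ioo (0 : ℝ) 1, (1 - t) * a ≤ b) :
    a ≤ b := by
  have hlim : Tendsto (fun t : ℝ => (1 - t) * a) (𝓝[>] 0) (𝓝 a) := by
    have : Tendsto (fun t : ℝ => (1 - t) * a) (𝓝 0) (𝓝 ((1 - 0) * a)) :=
      ((continuous_const.sub continuous_id).mul continuous_const).tendsto 0
    simpa using this.mono_left nhdsWithin_le_nhds
  refine le_of_tendsto hlim ?_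
  filter_upwards [Ioo_mem_nhdsGT one_pos] with t ht using h t ht

lemma add_mul_sq_le {a b c l : ℝ} (hc : 0 ≤ c) (hcl : c ≤ l) :
    (a + c * b) ^ 2 ≤ 2 * (a ^ 2 + l ^ 2 * b ^ 2) := by
  nlinarith [sq_nonneg (a - c * b), mul_le_mul_of_nonneg_right (pow_le_pow_left₀ hc hcl 2)
    (sq_nonneg b)]

section StrongConvexity

variable {E : Type*} [NormedAddCommGroup E] [NormedSpace ℝ E]

lemma StrongConvexOn.mul_sq_norm_sub_le_of_isMinOn {s : Set E} {μ : ℝ} {F : E → ℝ} {x y : E}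
    (hF : StrongConvexOn s μ F) (hmin : IsMinOn F s x) (hx : x ∈ s) (hy : y ∈ s) :
    μ / 2 * ‖y - x‖ ^ 2 ≤ F y - F x := by
  refine le_of_forall_one_sub_mul_le fun t ⟨ht0, ht1⟩ => ?_
  have hconv := hF.2 hx hy (sub_nonneg.2 ht1.le) ht0.le (sub_add_cancel 1 t)
  have hle : F x ≤ F ((1 - t) • x + t • y) :=
    hmin (hF.1 hx hy (sub_nonneg.2 ht1.le) ht0.le (sub_add_cancel 1 t))
  rw [norm_sub_rev] at hconv
  simp only [smul_eq_mul] at hconv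
  nlinarith

lemma StrongConvexOn.subset {s t : Set E} {μ : ℝ} {F : E → ℝ} (hF : StrongConvexOn t μ F)
    (hst : s ⊆ t) (hs : Convex ℝ s) : StrongConvexOn s μ F :=
  ⟨hs, fun _ hx _ hy => hF.2 (hst hx) (hst hy)⟩

lemma ConvexOn.fun_sum {ι : Type*} {s : Set E} (hs : Convex ℝ s) (t : Finset ι)
    {f : ι → E → ℝ} (hf : ∀ i ∈ t, ConvexOn ℝ s (f i)) : ConvexOn ℝ s fun x => ∑ i ∈ t, f i x := by
  simpa only [Finset.sum_fn] using
    Finset.sum_induction f (ConvexOn ℝ s) (fun _ _ => ConvexOn.add) (convexOn_const 0 hs) hf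

lemma StrongConvexOn.const_mul {s : Set E} {μ c : ℝ} {h : E → ℝ} (hh : StrongConvexOn s μ h)
    (hc : 0 ≤ c) : StrongConvexOn s (c * μ) fun x => c * h x := by
  refine ⟨hh.1, fun x hx y hy a b ha hb hab => ?_⟩
  have := mul_le_mul_of_nonneg_left (hh.2 hx hy ha hb hab) hc
  simp only [smul_eq_mul] at this ⊢
  linarith

lemma ConvexOn.add_strongConvexOn {s : Set E} {μ : ℝ} {f h : E → ℝ} (hf : ConvexOn ℝ s f)
    (hh : StrongConvexOn s μ h) : StrongConvexOn s μ (f + h) := by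
  simpa [StrongConvexOn] using hf.uniformConvexOn_zero.add hh

end StrongConvexity

section Euclidean

variable {n : ℕ} {X : Set (Euc n)}

lemma IsProjOn.inner_sub_nonpos (hX : Convex ℝ X) {p y z : Euc n} (hy : IsProjOn X p y)
    (hz : z ∈ X) : ⟪p - y, z - y⟫ ≤ 0 := by
  have : Nonempty X := ⟨⟨y, hy.1⟩⟩
  have hbdd : BddBelow (range fun w : X => ‖p - (w : Euc n)‖) :=
    ⟨0, forall_mem_range.2 fun _ => norm_nonneg _⟩
  have hinf : ‖p - y‖ = ⨅ w : X, ‖p - (w : Euc n)‖ :=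
    le_antisymm (le_ciInf fun w => hy.2 w w.2) (ciInf_le hbdd ⟨y, hy.1⟩)
  exact (norm_eq_iInf_iff_real_inner_le_zero hX hy.1).1 hinf z hz

lemma IsProjOn.norm_sub_sq_le (hX : Convex ℝ X) {p y z : Euc n} (hy : IsProjOn X p y)
    (hz : z ∈ X) : ‖y - z‖ ^ 2 ≤ ‖p - z‖ ^ 2 := by
  have hsplit : p - z = (p - y) + (y - z) := (sub_add_sub_cancel p y z).symm
  have hinner : 0 ≤ ⟪p - y, y - z⟫ := by
    rw [← neg_sub z y, inner_neg_right]
    linarith [hy.inner_sub_nonpos hX hz]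
  rw [hsplit, norm_add_sq_real]
  nlinarith [sq_nonneg ‖p - y‖]

lemma IsProjOn.norm_sub_le (hX : Convex ℝ X) {p y z : Euc n} (hy : IsProjOn X p y)
    (hz : z ∈ X) : ‖y - z‖ ≤ ‖p - z‖ :=
  pow_le_pow_iff_left₀ (norm_nonneg _) (norm_nonneg _) two_ne_zero |>.1 (hy.norm_sub_sq_le hX hz)

lemma IsSubgradAt.sub_le_inner {f : Euc n → ℝ} {x g : Euc n} (hg : IsSubgradAt f x g)
    (z : Euc n) : f x - f z ≤ ⟪g, x - z⟫ := by
  have := hg z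
  rw [← neg_sub x z, inner_neg_right] at this
  linarith

lemma IsSubgradAt.sub_le_mul_norm {f : Euc n → ℝ} {x g : Euc n} {C : ℝ}
    (hg : IsSubgradAt f x g) (hgC : ‖g‖ ≤ C) (z : Euc n) : f x - f z ≤ C * ‖z - x‖ := by
  have h1 := hg z
  have h2 := (abs_le.1 (abs_real_inner_le_norm g (z - x))).1
  nlinarith [norm_nonneg (z - x)]

lemma IsSubgradAt.add_const_mul {f h : Euc n → ℝ} {x g g' : Euc n} {c : ℝ}
    (hf : IsSubgradAt f x g) (hh : IsSubgradAt h x g') (hc : 0 ≤ c) :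
    IsSubgradAt (fun y => f y + c * h y) x (g + c • g') := fun y => by
  rw [inner_add_left, real_inner_smul_left]
  nlinarith [hf y, hh y]

lemma IsProjOn.norm_sub_sq_le_of_step (hX : Convex ℝ X) {γ : ℝ} {x G x' z : Euc n}
    (hproj : IsProjOn X (x - γ • G) x') (hz : z ∈ X) :
    ‖x' - z‖ ^ 2 ≤ ‖x - z‖ ^ 2 - 2 * γ * ⟪G, x - z⟫ + γ ^ 2 * ‖G‖ ^ 2 := by
  have hexpand : ‖x - γ • G - z‖ ^ 2 = ‖x - z‖ ^ 2 - 2 * γ * ⟪G, x - z⟫ + γ ^ 2 * ‖G‖ ^ 2 := by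
    rw [sub_right_comm, norm_sub_sq_real, real_inner_smul_right, norm_smul, mul_pow,
      Real.norm_eq_abs, sq_abs, real_inner_comm]
    ring
  exact hexpand ▸ hproj.norm_sub_sq_le hX hz

variable {C γ : ℝ} {y : ℕ → Euc n}

lemma mem_and_norm_sub_le_of_isProjOn_steps (hX : Convex ℝ X) (hγ : 0 ≤ γ) {N : ℕ}
    {g : ℕ → Euc n → Euc n}
    (hgC : ∀ j < N, ∀ w ∈ X, ‖g j w‖ ≤ C) (h0 : y 0 ∈ X)
    (hstep : ∀ j < N, IsProjOn X (y j - γ • g j (y j)) (y (j + 1))) :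
    y N ∈ X ∧ ‖y N - y 0‖ ≤ N * (γ * C) := by
  induction N with
  | zero => simpa using h0
  | succ N ih =>
    obtain ⟨hmem, hdist⟩ := ih (fun j hj => hgC j (by omega)) (fun j hj => hstep j (by omega))
    have hmove : ‖y (N + 1) - y N‖ ≤ γ * C := by
      have h1 := (hstep N N.lt_succ_self).norm_sub_le hX hmem
      rw [sub_sub_cancel_left, norm_neg, norm_smul, Real.norm_eq_abs, abs_of_nonneg hγ] at h1
      exact h1.trans (mul_le_mul_of_nonneg_left (hgC N N.lt_succ_self _ hmem) hγ)
    refine ⟨(hstep N N.lt_succ_self).1, ?_⟩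
    calc ‖y (N + 1) - y 0‖ ≤ ‖y (N + 1) - y N‖ + ‖y N - y 0‖ :=
          norm_sub_le_norm_sub_add_norm_sub _ _ _
      _ ≤ γ * C + N * (γ * C) := add_le_add hmove hdist
      _ = ((N + 1 : ℕ) : ℝ) * (γ * C) := by push_cast; ring

lemma norm_sub_sq_le_of_isProjOn_steps (hX : Convex ℝ X) (hγ : 0 ≤ γ) {N : ℕ}
    {φ : ℕ → Euc n → ℝ} {g : ℕ → Euc n → Euc n}
    (hsub : ∀ j < N, ∀ w ∈ X, IsSubgradAt (φ j) w (g j w) ∧ ‖g j w‖ ≤ C) (h0 : y 0 ∈ X)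
    (hstep : ∀ j < N, IsProjOn X (y j - γ • g j (y j)) (y (j + 1))) {z : Euc n} (hz : z ∈ X) :
    ‖y N - z‖ ^ 2 ≤
      ‖y 0 - z‖ ^ 2 - 2 * γ * ∑ j ∈ range N, (φ j (y 0) - φ j z) + (N * γ * C) ^ 2 := by
  induction N with
  | zero => simp
  | succ N ih =>
    have ih := ih (fun j hj => hsub j (by omega)) (fun j hj => hstep j (by omega))
    obtain ⟨hmem, hdist⟩ := mem_and_norm_sub_le_of_isProjOn_steps (N := N) hX hγ
      (fun j hj w hw => (hsub j (by omega) w hw).2) h0 (fun j hj => hstep j (by omega))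
    obtain ⟨hgrad, hgC⟩ := hsub N N.lt_succ_self _ hmem
    obtain ⟨hgrad₀, hgC₀⟩ := hsub N N.lt_succ_self _ h0
    have hC : 0 ≤ C := (norm_nonneg _).trans hgC
    have hlower : φ N (y 0) - φ N z - C * (N * (γ * C)) ≤ ⟪g N (y N), y N - z⟫ := by
      have hlip := hgrad₀.sub_le_mul_norm hgC₀ (y N)
      have := hgrad.sub_le_inner z
      nlinarith [mul_le_mul_of_nonneg_left hdist hC]
    have hone := (hstep N N.lt_succ_self).norm_sub_sq_le_of_step hX hz
    -- step `N` costs `γ²C² + 2γC · NγC`, and `∑_{j<N} (2j + 1) = N²`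
    rw [sum_range_succ]
    push_cast
    nlinarith [mul_le_mul_of_nonneg_left hlower hγ, pow_le_pow_left₀ (norm_nonneg _) hgC 2]

lemma norm_sub_sq_le_of_isProjOn_cycle (hX : Convex ℝ X) (hγ : 0 ≤ γ) {N : ℕ}
    {φ : Fin N → Euc n → ℝ} {g : Fin N → Euc n → Euc n}
    (hsub : ∀ j, ∀ w ∈ X, IsSubgradAt (φ j) w (g j w) ∧ ‖g j w‖ ≤ C) (h0 : y 0 ∈ X)
    (hstep : ∀ j (hj : j < N), IsProjOn X (y j - γ • g ⟨j, hj⟩ (y j)) (y (j + 1)))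
    {z : Euc n} (hz : z ∈ X) :
    ‖y N - z‖ ^ 2 ≤ ‖y 0 - z‖ ^ 2 - 2 * γ * ∑ j, (φ j (y 0) - φ j z) + (N * γ * C) ^ 2 := by
  let φ' : ℕ → Euc n → ℝ := fun j => if hj : j < N then φ ⟨j, hj⟩ else 0
  let g' : ℕ → Euc n → Euc n := fun j => if hj : j < N then g ⟨j, hj⟩ else 0
  have hφ' : ∀ j (hj : j < N), φ' j = φ ⟨j, hj⟩ := fun j hj => dif_pos hj
  have hg' : ∀ j (hj : j < N), g' j = g ⟨j, hj⟩ := fun j hj => dif_pos hj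
  have hsum : ∑ j ∈ range N, (φ' j (y 0) - φ' j z) = ∑ j, (φ j (y 0) - φ j z) := by
    rw [← Fin.sum_univ_eq_sum_range]
    exact sum_congr rfl fun j _ => by rw [hφ' j j.is_lt]
  rw [← hsum]
  exact norm_sub_sq_le_of_isProjOn_steps hX hγ
    (fun j hj => hφ' j hj ▸ hg' j hj ▸ hsub ⟨j, hj⟩) h0 (fun j hj => hg' j hj ▸ hstep j hj) hz

end Euclidean

theorem one_step_contraction_general {n : ℕ} (X : Set (Euc n))
    (hXcv : Convex ℝ X)
    (m : ℕ) (hm : 1 ≤ m)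
    (fi : Fin m → Euc n → ℝ) (hfi : ∀ i, ConvexOn ℝ Set.univ (fi i))
    (f : Euc n → ℝ) (hfdef : f = fun y => ∑ i, fi i y)
    (h : Euc n → ℝ) (μ : ℝ) (hμ : 0 < μ) (hh : StrongConvexOn Set.univ μ h)
    (Cf Ch : ℝ)
    (gf : Fin m → Euc n → Euc n) (gh : Euc n → Euc n)
    (hgf : ∀ i, ∀ y ∈ X, IsSubgradAt (fi i) y (gf i y) ∧ ‖gf i y‖ ≤ Cf)
    (hgh : ∀ y ∈ X, IsSubgradAt h y (gh y) ∧ ‖gh y‖ ≤ Ch)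
    (xlam : ℝ → Euc n)
    (hxlam : ∀ l, 0 < l → xlam l ∈ X ∧
      ∀ y ∈ X, f (xlam l) + l * h (xlam l) ≤ f y + l * h y)
    (γk lamk : ℝ) (hγk : 0 < γk) (hlamk : 0 < lamk)
    (xk : Euc n) (hxk : xk ∈ X)
    (xi : ℕ → Euc n) (hxi0 : xi 0 = xk)
    (hrec : ∀ i (hi : i < m),
      IsProjOn X
        (xi i - γk • (gf ⟨i, hi⟩ (xi i) + (lamk / (m : ℝ)) • gh (xi i)))
        (xi (i + 1))) :
    ‖xi m - xlam lamk‖ ^ 2 ≤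
      (1 - γk * lamk * μ / (m : ℝ)) * ‖xk - xlam lamk‖ ^ 2 +
        6 * (m : ℝ) ^ 2 * γk ^ 2 * (Cf ^ 2 + lamk ^ 2 * Ch ^ 2) := by
  obtain ⟨hxsX, hxsmin⟩ := hxlam lamk hlamk
  set xs := xlam lamk
  have hm1 : (1 : ℝ) ≤ m := by exact_mod_cast hm
  set c := lamk / m
  have hc : 0 ≤ c := by positivity
  have hsub : ∀ i, ∀ y ∈ X, IsSubgradAt (fun w => fi i w + c * h w) y (gf i y + c • gh y) ∧
      ‖gf i y + c • gh y‖ ≤ Cf + c * Ch := fun i y hy =>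
    ⟨(hgf i y hy).1.add_const_mul (hgh y hy).1 hc, norm_add_le_of_le (hgf i y hy).2 <| by
      rw [norm_smul, Real.norm_of_nonneg hc]; exact mul_le_mul_of_nonneg_left (hgh y hy).2 hc⟩
  have hdescent := norm_sub_sq_le_of_isProjOn_cycle hXcv hγk.le hsub (hxi0 ▸ hxk) hrec hxsX
  have hsum : ∑ i, (fi i xk + c * h xk - (fi i xs + c * h xs)) =
      f xk + lamk * h xk - (f xs + lamk * h xs) := by
    simp only [hfdef, sum_sub_distrib, sum_add_distrib, sum_const, card_univ, Fintype.card_fin,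
      nsmul_eq_mul, c]
    field_simp
  rw [hxi0, hsum] at hdescent
  have hF : StrongConvexOn X (lamk * μ) (f + fun y => lamk * h y) :=
    ((hfdef ▸ ConvexOn.fun_sum convex_univ univ fun i _ => hfi i).add_strongConvexOn
      (hh.const_mul hlamk.le)).subset (subset_univ X) hXcv
  have hgap := hF.mul_sq_norm_sub_le_of_isMinOn (isMinOn_iff.2 hxsmin) hxsX hxk
  simp only [Pi.add_apply] at hgap
  have hnoise :
      (m * γk * (Cf + c * Ch)) ^ 2 ≤ 6 * m ^ 2 * γk ^ 2 * (Cf ^ 2 + lamk ^ 2 * Ch ^ 2) := by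
    have := add_mul_sq_le (a := Cf) (b := Ch) hc (div_le_self hlamk.le hm1)
    nlinarith [sq_nonneg (m * γk), sq_nonneg Cf, sq_nonneg (lamk * Ch)]
  have hrate : γk * lamk * μ / m * ‖xk - xs‖ ^ 2 ≤ γk * lamk * μ * ‖xk - xs‖ ^ 2 := by
    gcongr
    exact div_le_self (by positivity) hm1
  have hgap' := mul_le_mul_of_nonneg_left hgap (by positivity : (0 : ℝ) ≤ 2 * γk)
  linarith

/-- one-step contraction toward the regularized minimizer. -/
theorem one_step_contraction {n : ℕ} (X : Set (Euc n))
    (hXne : X.Nonempty) (hXcp : IsCompact X) (hXcv : Convex ℝ X)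
    (m : ℕ) (hm : 1 ≤ m)
    (fi : Fin m → Euc n → ℝ) (hfi : ∀ i, ConvexOn ℝ Set.univ (fi i))
    (f : Euc n → ℝ) (hfdef : f = fun y => ∑ i, fi i y)
    (h : Euc n → ℝ) (μ : ℝ) (hμ : 0 < μ) (hh : StrongConvexOn Set.univ μ h)
    (Cf Ch : ℝ)
    (gf : Fin m → Euc n → Euc n) (gh : Euc n → Euc n)
    (hgf : ∀ i, ∀ y ∈ X, IsSubgradAt (fi i) y (gf i y) ∧ ‖gf i y‖ ≤ Cf)
    (hgh : ∀ y ∈ X, IsSubgradAt h y (gh y) ∧ ‖gh y‖ ≤ Ch)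
    (hCf : ∀ i, ∀ y ∈ X, ∀ g, IsSubgradAt (fi i) y g → ‖g‖ ≤ Cf)
    (hChb : ∀ y ∈ X, ∀ g, IsSubgradAt h y g → ‖g‖ ≤ Ch)
    (xlam : ℝ → Euc n)
    (hxlam : ∀ l, 0 < l → xlam l ∈ X ∧
      ∀ y ∈ X, f (xlam l) + l * h (xlam l) ≤ f y + l * h y)
    (γk lamk : ℝ) (hγk : 0 < γk) (hlamk : 0 < lamk)
    (hstep : γk * lamk * μ ≤ 2 * (m : ℝ))
    (xk : Euc n) (hxk : xk ∈ X)
    (xi : ℕ → Euc n) (hxi0 : xi 0 = xk)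
    (hrec : ∀ i (hi : i < m),
      IsProjOn X
        (xi i - γk • (gf ⟨i, hi⟩ (xi i) + (lamk / (m : ℝ)) • gh (xi i)))
        (xi (i + 1))) :
    ‖xi m - xlam lamk‖ ^ 2 ≤
      (1 - γk * lamk * μ / (m : ℝ)) * ‖xk - xlam lamk‖ ^ 2 +
        6 * (m : ℝ) ^ 2 * γk ^ 2 * (Cf ^ 2 + lamk ^ 2 * Ch ^ 2) :=
  one_step_contraction_general X hXcv m hm fi hfi f hfdef h μ hμ hh Cf Ch gf gh hgf hgh xlam hxlam
    γk lamk hγk hlamk xk hxk xi hxi0 hrec
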